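/- arXiv:2209.07279 — 2 statements merged into one kernel-verified Lean document; each statement's English description precedes it below -/
import Mathlib

section
/- If n ∈ ℕ, a₁, …, a_n ≥ 0 are real numbers and c > 0 is such that ∑_{j=1}^n a_j(1 + a_j)/(1 + log⁺(1/a_j))^{1/2} ≥ c (where summands with a_j = 0 are read as 0), then max_{1 ≤ j ≤ n} a_j ≥ min{c/(2√2), 1} · √(log n)/n. -/
open Matrix
open scoped BigOperators Classical ComplexOrder

namespace QPaper

variable {ι : Type*} [Fintype ι] [DecidableEq ι]

/-- The positive semidefinite square root of a matrix (junk value `0` if the matrix is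
not positive semidefinite). -/
noncomputable def psdSqrt (X : Matrix ι ι ℂ) : Matrix ι ι ℂ :=
  if h : X.PosSemidef then
    h.1.eigenvectorUnitary.1 * diagonal ((↑) ∘ (√·) ∘ h.1.eigenvalues) *
      (star h.1.eigenvectorUnitary : Matrix ι ι ℂ)
  else 0

/-- The normalized trace (Schatten 1) norm `‖X‖₁ = tr |X| / card ι`. -/
noncomputable def normOne (X : Matrix ι ι ℂ) : ℝ :=
  (psdSqrt (Xᴴ * X)).trace.re / Fintype.card ι

/-- The normalized Schatten 2 norm `‖X‖₂ = (tr (X* X) / card ι)^{1/2}`. -/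
noncomputable def normTwo (X : Matrix ι ι ℂ) : ℝ :=
  Real.sqrt ((Xᴴ * X).trace.re / Fintype.card ι)

/-- The operator norm of a matrix, acting on the Euclidean space. -/
noncomputable def opNorm (X : Matrix ι ι ℂ) : ℝ :=
  ‖Matrix.toEuclideanCLM (𝕜 := ℂ) X‖

/-- The Loewner order: `X ≤ Y` iff `Y - X` is positive semidefinite. -/
def LoewnerLE (X Y : Matrix ι ι ℂ) : Prop := (Y - X).PosSemidef

/-- Configurations of `n` qubits. -/
abbrev QState (n : ℕ) := Fin n → Fin 2

/-- The algebra of `n`-qubit observables `M₂(ℂ)^{⊗ n}`. -/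
abbrev Obs (n : ℕ) := Matrix (QState n) (QState n) ℂ

/-- The conditional expectation `E_S = ⊗_{j ∈ S} (½ tr)(·) 𝟏 ⊗ id` replacing each qubit in `S`
by its normalized partial trace:  `E_S(A) = 2^{-|S|} tr_S(A) ⊗ 𝟏_S`. -/
noncomputable def ESet {n : ℕ} (S : Finset (Fin n)) (A : Obs n) : Obs n :=
  Matrix.of fun x y =>
    if ∀ j ∈ S, x j = y j then
      ((2 : ℂ) ^ n)⁻¹ *
        ∑ z : QState n,
          A (fun j => if j ∈ S then z j else x j) (fun j => if j ∈ S then z j else y j)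
    else 0

/-- The derivation `d_j = 𝕀^{⊗(j-1)} ⊗ (𝕀 - ½ tr(·) 𝟏) ⊗ 𝕀^{⊗(n-j)}`. -/
noncomputable def dCoord {n : ℕ} (j : Fin n) (A : Obs n) : Obs n := A - ESet {j} A

/-- The quantum depolarizing semigroup `P_t = (e^{-t} 𝕀 + (1 - e^{-t}) ½ tr(·) 𝟏)^{⊗ n}`. -/
noncomputable def Pt {n : ℕ} (t : ℝ) (A : Obs n) : Obs n :=
  ∑ S : Finset (Fin n),
    (Real.exp (-t) ^ (n - S.card) * (1 - Real.exp (-t)) ^ S.card) • ESet S A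

/-- The generator `𝓛 = ∑_j d_j`. -/
noncomputable def Lgen {n : ℕ} (A : Obs n) : Obs n := ∑ j : Fin n, dCoord j A

/-- The carré du champ `Γ(A) = ½ (𝓛(A*) A + A* 𝓛(A) - 𝓛(A* A))`. -/
noncomputable def carre {n : ℕ} (A : Obs n) : Obs n :=
  (2 : ℂ)⁻¹ • (Lgen Aᴴ * A + Aᴴ * Lgen A - Lgen (Aᴴ * A))

/-- The total `L¹`-influence `Inf¹(A) = ∑_j ‖d_j A‖₁`. -/
noncomputable def inf1 {n : ℕ} (A : Obs n) : ℝ := ∑ j : Fin n, normOne (dCoord j A)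

/-- The total `L²`-influence `Inf²(A) = ∑_j ‖d_j A‖₂²`. -/
noncomputable def inf2 {n : ℕ} (A : Obs n) : ℝ := ∑ j : Fin n, normTwo (dCoord j A) ^ 2

/-- The mean part `2^{-n} tr(A) 𝟏`. -/
noncomputable def meanPart {n : ℕ} (A : Obs n) : Obs n :=
  (A.trace / (2 : ℂ) ^ n) • (1 : Obs n)

/-- The variance `Var(A) = ‖A - 2^{-n} tr(A) 𝟏‖₂²`. -/
noncomputable def Var {n : ℕ} (A : Obs n) : ℝ := normTwo (A - meanPart A) ^ 2


/-!
Let `M = max_j a_j` and assume `M < √(log n) / n`. Since `log n ≤ n`, this gives `M ≤ 1 / √n`, so every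
nonzero `a_j` has `log (1 / a_j) ≥ log n / 2` and its summand is at most `2√2 M / √(log n)`. Summing the
`n` summands, `c ≤ 2√2 n M / √(log n)`.
-/

open Real

-- `1 / 0 = 0` in Lean, so the summand vanishes at `x = 0` as the paper prescribes.
noncomputable def kklWeight (x : ℝ) : ℝ := x * (1 + x) / √(1 + (log (1 / x) ⊔ 0))

@[simp]
lemma kklWeight_zero : kklWeight 0 = 0 := by
  simp [kklWeight]

lemma kklWeight_le_of_le_log_one_div {x M s : ℝ} (hx : 0 ≤ x) (hxM : x ≤ M) (hs : 0 < s)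
    (hsM : s ≤ log (1 / M)) : kklWeight x ≤ 2 * M / √s := by
  rcases hx.eq_or_lt with rfl | hx
  · rw [kklWeight_zero]
    positivity
  have hM : 0 < M := hx.trans_le hxM
  have hM1 : M ≤ 1 := by
    rw [← log_nonpos_iff hM.le]
    rw [one_div, log_inv] at hsM
    linarith
  have hnum : x * (1 + x) ≤ 2 * M := by nlinarith
  have hden : √s ≤ √(1 + (log (1 / x) ⊔ 0)) := by
    have hlog : log (1 / M) ≤ log (1 / x) :=
      log_le_log (by positivity) (one_div_le_one_div_of_le hx hxM)
    have := le_max_left (log (1 / x)) 0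
    exact sqrt_le_sqrt (by linarith)
  exact div_le_div₀ (by positivity) hnum (sqrt_pos.2 hs) hden

-- `M x ≤ √(log x) ≤ √x` gives `√x ≤ 1 / M`.
lemma log_le_two_mul_log_one_div {x M : ℝ} (hx : 0 < x) (hM : 0 < M) (h : M * x ≤ √(log x)) :
    log x ≤ 2 * log (1 / M) := by
  have hsqrt : √x ≤ 1 / M := by
    have hMx : M * x ≤ √x := h.trans (sqrt_le_sqrt (log_le_self hx.le))
    rw [le_div_iff₀ hM]
    nlinarith [mul_self_sqrt hx.le, sqrt_pos.2 hx]
  have := log_le_log (sqrt_pos.2 hx) hsqrt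
  rw [log_sqrt hx.le] at this
  linarith

/-- If `a₁, …, a_n ≥ 0` and `c > 0` satisfy
`∑_j a_j (1 + a_j) / (1 + log⁺(1/a_j))^{1/2} ≥ c`, then
`max_j a_j ≥ min {c/(2√2), 1} · √(log n) / n`. -/
theorem aux_kkl_lemma (n : ℕ) (a : Fin n → ℝ) (ha : ∀ j, 0 ≤ a j) (c : ℝ) (hc : 0 < c)
    (h : c ≤ ∑ j : Fin n,
      a j * (1 + a j) / Real.sqrt (1 + (Real.log (1 / a j) ⊔ 0))) :
    ∃ j : Fin n,
      min (c / (2 * Real.sqrt 2)) 1 * (Real.sqrt (Real.log n) / n) ≤ a j := by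
  change c ≤ ∑ j, kklWeight (a j) at h
  have hne : Nonempty (Fin n) := not_isEmpty_iff.1 fun _ => by
    rw [Finset.univ_eq_empty, Finset.sum_empty] at h
    linarith
  obtain ⟨j₀, -, hj₀⟩ := Finset.exists_max_image Finset.univ a Finset.univ_nonempty
  refine ⟨j₀, ?_⟩
  set M := a j₀
  rcases le_or_gt (√(log n) / n) M with hM | hM
  · exact (mul_le_of_le_one_left (by positivity) (min_le_right _ _)).trans hM
  have hn : (0 : ℝ) < n := Nat.cast_pos.2 Fin.pos'
  have hM0 : 0 < M := by
    by_contra! hM0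
    have hzero : ∀ j, a j = 0 := fun j => le_antisymm ((hj₀ j (Finset.mem_univ j)).trans hM0) (ha j)
    simp only [hzero, kklWeight_zero, Finset.sum_const_zero] at h
    linarith
  have hMn : M * n < √(log n) := (lt_div_iff₀ hn).1 hM
  have hlog : 0 < log n := sqrt_pos.1 ((mul_pos hM0 hn).trans hMn)
  have hsum : c ≤ n * (2 * M / √(log n / 2)) := by
    calc c ≤ ∑ j, kklWeight (a j) := h
      _ ≤ ∑ _j : Fin n, 2 * M / √(log n / 2) := Finset.sum_le_sum fun j _ =>
          kklWeight_le_of_le_log_one_div (ha j) (hj₀ j (Finset.mem_univ j)) (by positivity)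
            (by linarith [log_le_two_mul_log_one_div hn hM0 hMn.le])
      _ = n * (2 * M / √(log n / 2)) := by simp
  calc min (c / (2 * √2)) 1 * (√(log n) / n) ≤ c / (2 * √2) * (√(log n) / n) := by
        gcongr
        exact min_le_left _ _
    _ ≤ n * (2 * M / √(log n / 2)) / (2 * √2) * (√(log n) / n) := by gcongr
    _ = M := by
        rw [sqrt_div hlog.le]
        field_simp

end QPaper
end

section
/- For every N ≥ 1, every m ≥ 1, and all matrices X₁, …, X_m, Y₁, …, Y_m ∈ M_N(ℂ), one has |∑_{j=1}^m ⟨X_j, Y_j⟩| ≤ ‖(∑_{j=1}^m X_j* X_j)^{1/2}‖₁ · ‖∑_{j=1}^m Y_j* Y_j‖^{1/2}, where the square root is the positive semidefinite square root. -/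
/-! Write `A = ∑ⱼ Xⱼ* Xⱼ` and `B = ∑ⱼ Yⱼ* Yⱼ`, and compute the trace in an orthonormal eigenbasis
`(eᵢ)` of `A`, with eigenvalues `λᵢ`: `∑ⱼ tr (Xⱼ* Yⱼ) = ∑ᵢ ∑ⱼ ⟪Xⱼ eᵢ, Yⱼ eᵢ⟫`. For each `i`,
Cauchy–Schwarz in `ℓ²(m; ℂᴺ)` bounds the inner sum by `(∑ⱼ ‖Xⱼ eᵢ‖²)^{1/2} (∑ⱼ ‖Yⱼ eᵢ‖²)^{1/2}
= λᵢ^{1/2} ⟪eᵢ, B eᵢ⟫^{1/2} ≤ λᵢ^{1/2} ‖B‖^{1/2}`, and `∑ᵢ λᵢ^{1/2} = tr A^{1/2} = N ‖A^{1/2}‖₁`. -/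

open Matrix
open scoped BigOperators Classical ComplexOrder

open scoped InnerProductSpace

theorem norm_sum_inner_le_sqrt_mul_sqrt {𝕜 E κ : Type*} [RCLike 𝕜] [NormedAddCommGroup E]
    [InnerProductSpace 𝕜 E] [Fintype κ] (u v : κ → E) :
    ‖∑ j, ⟪u j, v j⟫_𝕜‖ ≤ √(∑ j, ‖u j‖ ^ 2) * √(∑ j, ‖v j‖ ^ 2) := by
  simpa [PiLp.inner_apply, PiLp.norm_eq_of_L2] using
    norm_inner_le_norm (𝕜 := 𝕜) (WithLp.toLp 2 u) (WithLp.toLp 2 v)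

namespace ContinuousLinearMap

variable {𝕜 E κ : Type*} [RCLike 𝕜] [NormedAddCommGroup E] [InnerProductSpace 𝕜 E]
  [CompleteSpace E] [Fintype κ]

theorem inner_sum_star_mul_apply (S T : κ → E →L[𝕜] E) (x : E) :
    ⟪x, (∑ j, star (S j) * T j) x⟫_𝕜 = ∑ j, ⟪S j x, T j x⟫_𝕜 := by
  simp [inner_sum, star_eq_adjoint, adjoint_inner_right]

theorem re_inner_sum_star_mul_self_apply (S : κ → E →L[𝕜] E) (x : E) :
    RCLike.re ⟪x, (∑ j, star (S j) * S j) x⟫_𝕜 = ∑ j, ‖S j x‖ ^ 2 := by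
  rw [inner_sum_star_mul_apply, map_sum]
  simp

theorem sum_norm_apply_sq_le (T : κ → E →L[𝕜] E) (x : E) :
    ∑ j, ‖T j x‖ ^ 2 ≤ ‖∑ j, star (T j) * T j‖ * ‖x‖ ^ 2 := by
  set B := ∑ j, star (T j) * T j
  calc ∑ j, ‖T j x‖ ^ 2 = RCLike.re ⟪x, B x⟫_𝕜 := (re_inner_sum_star_mul_self_apply T x).symm
    _ ≤ ‖x‖ * ‖B x‖ := (RCLike.re_le_norm _).trans (norm_inner_le_norm _ _)
    _ ≤ ‖x‖ * (‖B‖ * ‖x‖) := by gcongr; exact B.le_opNorm x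
    _ = ‖B‖ * ‖x‖ ^ 2 := by ring

theorem norm_trace_sum_star_mul_le {ι : Type*} [Fintype ι] (S T : κ → E →L[𝕜] E)
    (b : OrthonormalBasis ι 𝕜 E) :
    ‖LinearMap.trace 𝕜 E (∑ j, star (S j) * T j : E →L[𝕜] E)‖ ≤
      (∑ i, √(RCLike.re ⟪b i, (∑ j, star (S j) * S j) (b i)⟫_𝕜)) *
        √‖∑ j, star (T j) * T j‖ := by
  rw [LinearMap.trace_eq_sum_inner _ b, Finset.sum_mul]
  refine (norm_sum_le _ _).trans (Finset.sum_le_sum fun i _ => ?_)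
  have hT : ∑ j, ‖T j (b i)‖ ^ 2 ≤ ‖∑ j, star (T j) * T j‖ := by
    simpa [b.orthonormal.1 i] using sum_norm_apply_sq_le T (b i)
  calc ‖⟪b i, (∑ j, star (S j) * T j) (b i)⟫_𝕜‖
      = ‖∑ j, ⟪S j (b i), T j (b i)⟫_𝕜‖ := by rw [← inner_sum_star_mul_apply]
    _ ≤ √(∑ j, ‖S j (b i)‖ ^ 2) * √(∑ j, ‖T j (b i)‖ ^ 2) :=
        norm_sum_inner_le_sqrt_mul_sqrt _ _
    _ ≤ _ := by
        rw [re_inner_sum_star_mul_self_apply]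
        gcongr

end ContinuousLinearMap

namespace Matrix

variable {𝕜 n : Type*} [RCLike 𝕜] [Fintype n] [DecidableEq n]

theorem trace_toEuclideanCLM (M : Matrix n n 𝕜) :
    LinearMap.trace 𝕜 _ (toEuclideanCLM (𝕜 := 𝕜) M : EuclideanSpace 𝕜 n →ₗ[𝕜] _) = M.trace := by
  rw [coe_toEuclideanCLM_eq_toEuclideanLin]
  exact trace_toLin_eq M (PiLp.basisFun 2 𝕜 n)

theorem IsHermitian.re_inner_eigenvectorBasis_toEuclideanCLM {A : Matrix n n 𝕜}
    (hA : A.IsHermitian) (i : n) :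
    RCLike.re ⟪hA.eigenvectorBasis i, toEuclideanCLM (𝕜 := 𝕜) A (hA.eigenvectorBasis i)⟫_𝕜 =
      hA.eigenvalues i := by
  rw [hA.eigenvalues_eq, EuclideanSpace.inner_eq_star_dotProduct, dotProduct_comm]
  rfl

theorem IsHermitian.trace_cfc {A : Matrix n n 𝕜} (hA : A.IsHermitian) (f : ℝ → ℝ) :
    (cfc f A).trace = ∑ i, (f (hA.eigenvalues i) : 𝕜) := by
  rw [hA.cfc_eq, IsHermitian.cfc, Unitary.conjStarAlgAut_apply, trace_mul_cycle,
    Unitary.coe_star_mul_self, Matrix.one_mul, trace_diagonal]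
  rfl

end Matrix

namespace QPaper

variable {ι : Type*} [Fintype ι] [DecidableEq ι]

theorem psdSqrt_eq_cfc {A : Matrix ι ι ℂ} (hA : A.PosSemidef) :
    psdSqrt A = cfc Real.sqrt A := by
  rw [psdSqrt, dif_pos hA, hA.1.cfc_eq]
  rfl

theorem conjTranspose_psdSqrt_mul_psdSqrt {A : Matrix ι ι ℂ} (hA : A.PosSemidef) :
    (psdSqrt A)ᴴ * psdSqrt A = A := by
  have hsqrt : ∀ x ∈ spectrum ℝ A, √x * √x = x := by
    intro x hx
    obtain ⟨i, rfl⟩ := hA.1.spectrum_real_eq_range_eigenvalues ▸ hx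
    exact Real.mul_self_sqrt (hA.eigenvalues_nonneg i)
  rw [psdSqrt_eq_cfc hA, ← star_eq_conjTranspose, (cfc_predicate Real.sqrt A).star_eq,
    ← cfc_mul .., cfc_congr hsqrt, cfc_id' ℝ A hA.1.isSelfAdjoint]

theorem normOne_psdSqrt {A : Matrix ι ι ℂ} (hA : A.PosSemidef) :
    normOne (psdSqrt A) = (∑ i, √(hA.1.eigenvalues i)) / Fintype.card ι := by
  rw [normOne, conjTranspose_psdSqrt_mul_psdSqrt hA, psdSqrt_eq_cfc hA, hA.1.trace_cfc]
  simp

theorem vector_valued_cauchy_schwarz_general (N m : ℕ)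
    (X Y : Fin m → Matrix (Fin N) (Fin N) ℂ) :
    ‖∑ j : Fin m, ((X j)ᴴ * Y j).trace / N‖ ≤
      normOne (psdSqrt (∑ j : Fin m, (X j)ᴴ * X j)) *
        Real.sqrt (opNorm (∑ j : Fin m, (Y j)ᴴ * Y j)) := by
  have hA : (∑ j, (X j)ᴴ * X j).PosSemidef :=
    posSemidef_sum _ fun j _ => posSemidef_conjTranspose_mul_self (X j)
  have key := ContinuousLinearMap.norm_trace_sum_star_mul_le
    (fun j => toEuclideanCLM (𝕜 := ℂ) (X j)) (fun j => toEuclideanCLM (𝕜 := ℂ) (Y j))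
    hA.1.eigenvectorBasis
  simp only [← map_star, ← map_mul, ← map_sum, trace_toEuclideanCLM,
    hA.1.re_inner_eigenvectorBasis_toEuclideanCLM, star_eq_conjTranspose] at key
  rw [← Finset.sum_div, norm_div, ← trace_sum, normOne_psdSqrt hA, div_mul_eq_mul_div,
    Complex.norm_natCast, Fintype.card_fin]
  gcongr
  exact key

/-- For all `X₁, …, X_m, Y₁, …, Y_m ∈ M_N(ℂ)`,
`|∑_j ⟨X_j, Y_j⟩| ≤ ‖(∑_j X_j* X_j)^{1/2}‖₁ · ‖∑_j Y_j* Y_j‖^{1/2}`, where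
`⟨X, Y⟩ = N^{−1} tr(X* Y)`, `‖·‖₁` is the normalized trace norm, and `‖·‖` the operator
norm. -/
theorem vector_valued_cauchy_schwarz (N m : ℕ) (hN : 1 ≤ N) (hm : 1 ≤ m)
    (X Y : Fin m → Matrix (Fin N) (Fin N) ℂ) :
    ‖∑ j : Fin m, ((X j)ᴴ * Y j).trace / N‖ ≤
      normOne (psdSqrt (∑ j : Fin m, (X j)ᴴ * X j)) *
        Real.sqrt (opNorm (∑ j : Fin m, (Y j)ᴴ * Y j)) :=
  vector_valued_cauchy_schwarz_general N m X Y

end QPaper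
end
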